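/- Let R be a K-subalgebra of K⟦x⟧ such that the quotient K⟦x⟧/R has finite length as an R-module, so that o(R) is a numerical semigroup with conductor c(o(R)). Then every nonzero f ∈ K⟦x⟧ with o(f) ≥ c(o(R)) belongs to R; equivalently, x^{c(o(R))}·K⟦x⟧ ⊆ R. -/

import Mathlib

set_option synthInstance.maxHeartbeats 1000000
set_option maxHeartbeats 1000000

open PowerSeries

/-- The order of a formal power series: the least `i` such that the coefficient of `x^i`
is nonzero (junk value `0` for the zero series). -/
noncomputable def ord (K : Type*) [Field K] (f : PowerSeries K) : ℕ :=
  sInf {i | coeff i f ≠ 0}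

/-- The set of orders of nonzero elements of a subalgebra `R ⊆ K⟦x⟧`. -/
def oSet (K : Type*) [Field K] (R : Subalgebra K (PowerSeries K)) : Set ℕ :=
  {n | ∃ f ∈ R, f ≠ 0 ∧ ord K f = n}

/-- The quotient `K⟦x⟧/R` has finite length as an `R`-module. -/
def FiniteLengthQuot (K : Type*) [Field K] (R : Subalgebra K (PowerSeries K)) : Prop :=
  IsFiniteLength R (PowerSeries K ⧸ LinearMap.range (Algebra.linearMap R (PowerSeries K)))

/-- The conductor of a subset `S ⊆ ℕ`: the least `c` such that every `n ≥ c` lies in `S`. -/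
noncomputable def natConductor (S : Set ℕ) : ℕ := sInf {c | ∀ n, c ≤ n → n ∈ S}

/-!
Finite length makes the images of the ideals `x^n K⟦x⟧` in `K⟦x⟧/R` stabilize from some `N > 0`
on, so `x^N K⟦x⟧ ⊆ x^m K⟦x⟧ + R` for all `m ≥ N`. The case `m = N + 1` yields `r₀ = x^N u ∈ R`
with `u` a unit, and the case `m = 2N` then gives `M = r₀ M ⊆ J M` for the image `M` of
`x^N K⟦x⟧` and the ideal `J` of elements of `R` without constant term. Since `M` is finitely
generated, Nakayama provides `r ∈ 1 + J` with `r M = 0`; such an `r` is a unit of `K⟦x⟧`, hence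
`x^N K⟦x⟧ ⊆ R`. In particular `o(R)` contains every `n ≥ N`, and a series of order at least
`c(o(R))` is pushed into `x^N K⟦x⟧` by subtracting scalar multiples of elements of `R` of the
same order, one order at a time.
-/

namespace PowerSeries

variable {K : Type*} [Field K] {R : Subalgebra K K⟦X⟧}

theorem ord_eq_toNat_order (f : K⟦X⟧) : ord K f = f.order.toNat := by
  rcases eq_or_ne f 0 with rfl | hf
  · simp [ord]
  refine le_antisymm (Nat.sInf_le (coeff_order hf)) (not_lt.mp fun hlt => ?_)
  exact Nat.sInf_mem (s := {i | coeff i f ≠ 0}) ⟨_, coeff_order hf⟩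
    (coeff_of_lt_order_toNat _ hlt)

theorem X_pow_ord_dvd (f : K⟦X⟧) : X ^ ord K f ∣ f := by
  rw [ord_eq_toNat_order]
  exact X_pow_order_dvd

theorem ord_X_pow (n : ℕ) : ord K ((X : K⟦X⟧) ^ n) = n := by
  simp [ord_eq_toNat_order]

theorem exists_eq_X_pow_ord_mul_isUnit {f : K⟦X⟧} (hf : f ≠ 0) :
    ∃ u : K⟦X⟧, IsUnit u ∧ f = X ^ ord K f * u :=
  ⟨divXPowOrder f, isUnit_divided_by_X_pow_order hf,
    by rw [ord_eq_toNat_order, X_pow_order_mul_divXPowOrder]⟩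

variable (R) in
noncomputable def xPowSubmodule (n : ℕ) : Submodule R K⟦X⟧ :=
  (Ideal.span {(X : K⟦X⟧) ^ n}).restrictScalars R

theorem mem_xPowSubmodule {n : ℕ} {f : K⟦X⟧} : f ∈ xPowSubmodule R n ↔ X ^ n ∣ f := by
  simp [xPowSubmodule, Ideal.mem_span_singleton]

theorem xPowSubmodule_antitone : Antitone (xPowSubmodule R) := fun _ _ hnm _ hf =>
  mem_xPowSubmodule.mpr ((pow_dvd_pow X hnm).trans (mem_xPowSubmodule.mp hf))

theorem mem_one_submodule_iff {f : K⟦X⟧} : f ∈ (1 : Submodule R K⟦X⟧) ↔ f ∈ R := by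
  rw [Submodule.mem_one]
  exact ⟨by rintro ⟨r, rfl⟩; exact r.2, fun hf => ⟨⟨f, hf⟩, rfl⟩⟩

theorem smul_mkQ_one (r : R) (f : K⟦X⟧) :
    r • (1 : Submodule R K⟦X⟧).mkQ f = (1 : Submodule R K⟦X⟧).mkQ (r * f) := by
  rw [← map_smul]
  rfl

theorem exists_xPowSubmodule_le_sup_one [IsArtinian R (K⟦X⟧ ⧸ (1 : Submodule R K⟦X⟧))] :
    ∃ N, 0 < N ∧ ∀ m, N ≤ m → xPowSubmodule R N ≤ xPowSubmodule R m ⊔ 1 := by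
  let image : ℕ →o (Submodule R (K⟦X⟧ ⧸ (1 : Submodule R K⟦X⟧)))ᵒᵈ :=
    ⟨fun n => (xPowSubmodule R n).map (Submodule.mkQ 1),
      fun _ _ hnm => Submodule.map_mono (xPowSubmodule_antitone hnm)⟩
  obtain ⟨N, hN⟩ := IsArtinian.monotone_stabilizes image
  refine ⟨N + 1, N.succ_pos, fun m hm => ?_⟩
  calc xPowSubmodule R (N + 1)
      ≤ xPowSubmodule R N := xPowSubmodule_antitone N.le_succ
    _ ≤ ((xPowSubmodule R N).map (Submodule.mkQ 1)).comap (Submodule.mkQ 1) :=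
      Submodule.le_comap_map _ _
    _ = ((xPowSubmodule R m).map (Submodule.mkQ 1)).comap (Submodule.mkQ 1) :=
      congrArg (fun p => p.comap (Submodule.mkQ 1)) (hN m (by omega))
    _ = xPowSubmodule R m ⊔ 1 := by rw [Submodule.comap_map_mkQ, sup_comm]

theorem exists_mem_eq_X_pow_mul_isUnit {N : ℕ}
    (hN : xPowSubmodule R N ≤ xPowSubmodule R (N + 1) ⊔ 1) :
    ∃ r ∈ R, ∃ u : K⟦X⟧, IsUnit u ∧ r = X ^ N * u := by
  obtain ⟨y, hy, r, hr, hyr⟩ := Submodule.mem_sup.mp (hN (mem_xPowSubmodule.mpr dvd_rfl))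
  obtain ⟨q, rfl⟩ := mem_xPowSubmodule.mp hy
  refine ⟨r, mem_one_submodule_iff.mp hr, 1 - X * q, ?_, ?_⟩
  · simp [isUnit_iff_constantCoeff]
  · linear_combination hyr

theorem forall_X_pow_dvd_mem_of_le_sup_one [IsNoetherian R (K⟦X⟧ ⧸ (1 : Submodule R K⟦X⟧))]
    {N : ℕ} (hN0 : 0 < N) (hN : ∀ m, N ≤ m → xPowSubmodule R N ≤ xPowSubmodule R m ⊔ 1)
    (f : K⟦X⟧) (hf : X ^ N ∣ f) : f ∈ R := by
  let J : Ideal R := RingHom.ker (constantCoeff.comp (R.val : R →+* K⟦X⟧))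
  have mem_J (r : R) : r ∈ J ↔ constantCoeff (r : K⟦X⟧) = 0 := RingHom.mem_ker
  let M := (xPowSubmodule R N).map (Submodule.mkQ 1)
  obtain ⟨r₀, hr₀, u, hu, hr₀u⟩ := exists_mem_eq_X_pow_mul_isUnit (hN (N + 1) N.le_succ)
  obtain ⟨v, huv⟩ := hu.exists_right_inv
  have hr₀J : ⟨r₀, hr₀⟩ ∈ J := by simp [mem_J, hr₀u, hN0.ne']
  have hM : M ≤ J • M := by
    rintro - ⟨g, hg, rfl⟩
    obtain ⟨y, hy, z, hz, rfl⟩ := Submodule.mem_sup.mp (hN (N + N) (by omega) hg)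
    obtain ⟨q, rfl⟩ := mem_xPowSubmodule.mp hy
    have hz0 : (1 : Submodule R K⟦X⟧).mkQ z = 0 := by
      rwa [Submodule.mkQ_apply, Submodule.Quotient.mk_eq_zero]
    have hfac : X ^ (N + N) * q = r₀ * (X ^ N * (v * q)) := by
      rw [hr₀u]
      linear_combination (-(X ^ (N + N) * q)) * huv
    rw [map_add, hz0, add_zero, hfac, ← smul_mkQ_one ⟨r₀, hr₀⟩]
    exact Submodule.smul_mem_smul hr₀J
      ⟨_, mem_xPowSubmodule.mpr (dvd_mul_right _ _), rfl⟩
  obtain ⟨r, hr1, hrM⟩ := Submodule.exists_sub_one_mem_and_smul_eq_zero_of_fg_of_le_smul J M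
    (IsNoetherian.noetherian M) hM
  have hr : IsUnit (r : K⟦X⟧) := by
    rw [mem_J, Subalgebra.coe_sub, map_sub, OneMemClass.coe_one, map_one, sub_eq_zero] at hr1
    rw [isUnit_iff_constantCoeff, hr1]
    exact isUnit_one
  obtain ⟨w, hrw⟩ := hr.exists_right_inv
  have hwf := hrM _ ⟨w * f, mem_xPowSubmodule.mpr (dvd_mul_of_dvd_right hf _), rfl⟩
  rwa [smul_mkQ_one, Submodule.mkQ_apply, Submodule.Quotient.mk_eq_zero, mem_one_submodule_iff,
    ← mul_assoc, hrw, one_mul] at hwf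

theorem exists_forall_X_pow_dvd_mem (h : FiniteLengthQuot K R) :
    ∃ N, ∀ f : K⟦X⟧, X ^ N ∣ f → f ∈ R := by
  rw [FiniteLengthQuot, ← Submodule.one_eq_range (R := R),
    isFiniteLength_iff_isNoetherian_isArtinian] at h
  obtain ⟨_, _⟩ := h
  obtain ⟨N, hN0, hN⟩ := exists_xPowSubmodule_le_sup_one (R := R)
  exact ⟨N, forall_X_pow_dvd_mem_of_le_sup_one hN0 hN⟩

end PowerSeries

theorem mem_of_natConductor_le {S : Set ℕ} {N : ℕ} (h : ∀ n, N ≤ n → n ∈ S) {n : ℕ}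
    (hn : natConductor S ≤ n) : n ∈ S :=
  Nat.sInf_mem (s := {c | ∀ n, c ≤ n → n ∈ S}) ⟨N, h⟩ n hn

namespace PowerSeries

variable {K : Type*} [Field K] {R : Subalgebra K K⟦X⟧}

theorem X_pow_mem_oSet {N : ℕ} (hN : ∀ f : K⟦X⟧, X ^ N ∣ f → f ∈ R) :
    ∀ n, N ≤ n → n ∈ oSet K R := fun n hn =>
  ⟨X ^ n, hN _ (pow_dvd_pow X hn), pow_ne_zero n X_ne_zero, ord_X_pow n⟩

theorem forall_X_pow_dvd_mem_of_succ {n : ℕ} (hn : n ∈ oSet K R)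
    (h : ∀ f : K⟦X⟧, X ^ (n + 1) ∣ f → f ∈ R) (f : K⟦X⟧) (hf : X ^ n ∣ f) : f ∈ R := by
  obtain ⟨r, hrR, hr0, hrn⟩ := hn
  obtain ⟨u, hu, hru⟩ := exists_eq_X_pow_ord_mul_isUnit hr0
  rw [hrn] at hru
  obtain ⟨g, rfl⟩ := hf
  set a := constantCoeff g / constantCoeff u
  have hgu : X ∣ g - a • u := by
    rw [X_dvd_iff, map_sub, constantCoeff_smul, smul_eq_mul,
      div_mul_cancel₀ _ (isUnit_iff_constantCoeff.mp hu).ne_zero, sub_self]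
  have hdiff : X ^ (n + 1) ∣ X ^ n * g - a • r := by
    rw [hru, ← mul_smul_comm, ← mul_sub, pow_succ]
    exact mul_dvd_mul_left _ hgu
  simpa using add_mem (h _ hdiff) (R.smul_mem hrR a)

theorem forall_X_pow_natConductor_dvd_mem {N : ℕ} (hN : ∀ f : K⟦X⟧, X ^ N ∣ f → f ∈ R)
    (f : K⟦X⟧) (hf : X ^ natConductor (oSet K R) ∣ f) : f ∈ R := by
  have hmem := fun n (hn : natConductor (oSet K R) ≤ n) =>
    mem_of_natConductor_le (X_pow_mem_oSet hN) hn
  have descend : ∀ k n, natConductor (oSet K R) ≤ n → N ≤ n + k →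
      ∀ f : K⟦X⟧, X ^ n ∣ f → f ∈ R := by
    intro k
    induction k with
    | zero => exact fun n _ hNn f hf => hN f ((pow_dvd_pow X hNn).trans hf)
    | succ k ih => exact fun n hn hNn =>
      forall_X_pow_dvd_mem_of_succ (hmem n hn) (ih (n + 1) (by omega) (by omega))
  exact descend N _ le_rfl (by omega) f hf

end PowerSeries

/-- If `K⟦x⟧/R` has finite length as an `R`-module, then every nonzero power series whose
order is at least the conductor of `o(R)` belongs to `R`; equivalently
`x^{c(o(R))}·K⟦x⟧ ⊆ R`. -/
theorem stmt_3 (K : Type*) [Field K] (R : Subalgebra K (PowerSeries K))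
    (h : FiniteLengthQuot K R) :
    (∀ f : PowerSeries K, f ≠ 0 → natConductor (oSet K R) ≤ ord K f → f ∈ R) ∧
      (∀ g : PowerSeries K, (X : PowerSeries K) ^ natConductor (oSet K R) * g ∈ R) := by
  obtain ⟨N, hN⟩ := exists_forall_X_pow_dvd_mem h
  exact ⟨fun f _ hf =>
      forall_X_pow_natConductor_dvd_mem hN f ((pow_dvd_pow X hf).trans (X_pow_ord_dvd f)),
    fun g => forall_X_pow_natConductor_dvd_mem hN _ (dvd_mul_right _ g)⟩
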